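/- arXiv:1604.06498 — 2 statements merged into one kernel-verified Lean document; each statement's English description precedes it below -/
import Mathlib

section
/- For every h, w* ∈ ℝ and g ≥ 0, writing ŵ = T(h,g), one has -(w* - ŵ)·(ŵ - h) ≤ g·(|w*| - |ŵ|). -/
noncomputable def softThreshold (w g : ℝ) : ℝ :=
  if 0 < w then max (w - g) 0 else min (w + g) 0

theorem softThreshold_key_inequality (h wstar g : ℝ) (hg : 0 ≤ g) :
    -((wstar - softThreshold h g) * (softThreshold h g - h))
      ≤ g * (|wstar| - |softThreshold h g|) := by
  unfold softThreshold
  split_ifs with hh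
  · rcases le_or_gt (h - g) 0 with hc | hc
    · rw [max_eq_right hc]
      rcases abs_cases wstar with ⟨e1, e2⟩ | ⟨e1, e2⟩ <;> simp <;> nlinarith
    · rw [max_eq_left hc.le, abs_of_pos hc]
      rcases abs_cases wstar with ⟨e1, e2⟩ | ⟨e1, e2⟩ <;> nlinarith
  · push_neg at hh
    rcases le_or_gt 0 (h + g) with hc | hc
    · rw [min_eq_right hc]
      rcases abs_cases wstar with ⟨e1, e2⟩ | ⟨e1, e2⟩ <;> simp <;> nlinarith
    · rw [min_eq_left hc.le, abs_of_neg hc]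
      rcases abs_cases wstar with ⟨e1, e2⟩ | ⟨e1, e2⟩ <;> nlinarith
end

section
/- Let w, h ∈ ℝᵖ with w = T(h, g) for per-coordinate gravities g_j ≥ 0, and let w* ∈ ℝᵖ. If g_j ≤ G for all j, then -(w* - w)·(w - h) ≤ G·(‖w*‖₁ - ‖w‖₁) + Σ_j (G - g_j)·|w_j|. -/
lemma softThreshold_key (h g ws G : ℝ) (hg : 0 ≤ g) (hG : g ≤ G) :
    -((ws - softThreshold h g) * (softThreshold h g - h))
      ≤ G * |ws| - g * |softThreshold h g| := by
  have hws : |ws| ≥ 0 := abs_nonneg ws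
  have h1 : ws ≤ |ws| := le_abs_self ws
  have h2 : -ws ≤ |ws| := neg_le_abs ws
  unfold softThreshold
  by_cases hh : 0 < h
  · simp only [if_pos hh]
    rcases le_or_gt g h with hc | hc
    · rw [max_eq_left (by linarith), abs_of_nonneg (show (0:ℝ) ≤ h - g by linarith)]
      nlinarith
    · rw [max_eq_right (by linarith), abs_of_nonneg le_rfl]
      nlinarith
  · simp only [if_neg hh]
    push_neg at hh
    rcases le_or_gt (h + g) 0 with hc | hc
    · rw [min_eq_left hc, abs_of_nonpos hc]
      nlinarith
    · rw [min_eq_right (by linarith), abs_of_nonpos le_rfl]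
      nlinarith

theorem truncation_key_inequality_vector (p : ℕ) (h wstar : Fin p → ℝ)
    (g : Fin p → ℝ) (hg : ∀ j, 0 ≤ g j) (G : ℝ) (hG : ∀ j, g j ≤ G)
    (w : Fin p → ℝ) (hw : ∀ j, w j = softThreshold (h j) (g j)) :
    -(∑ j, (wstar j - w j) * (w j - h j))
      ≤ G * ((∑ j, |wstar j|) - ∑ j, |w j|) + ∑ j, (G - g j) * |w j| := by
  have key : ∀ j, -((wstar j - w j) * (w j - h j))
      ≤ G * |wstar j| - g j * |w j| := by
    intro j
    rw [hw j]
    exact softThreshold_key (h j) (g j) (wstar j) G (hg j) (hG j)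
  calc -(∑ j, (wstar j - w j) * (w j - h j))
      = ∑ j, -((wstar j - w j) * (w j - h j)) := by rw [Finset.sum_neg_distrib]
    _ ≤ ∑ j, (G * |wstar j| - g j * |w j|) := Finset.sum_le_sum fun j _ => key j
    _ = G * ((∑ j, |wstar j|) - ∑ j, |w j|) + ∑ j, (G - g j) * |w j| := by
        rw [mul_sub, Finset.mul_sum, Finset.mul_sum, ← Finset.sum_sub_distrib,
          ← Finset.sum_add_distrib]
        exact Finset.sum_congr rfl fun j _ => by ring
end
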